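/- arXiv:1901.09722 — 5 statements merged into one kernel-verified Lean document; each statement's English description precedes it below -/
import Mathlib

section
/- Let T ⊆ ℝ and F : T → c(M). Then V⁺(F,T) < +∞ if and only if there exists a nondecreasing bounded function φ : T → ℝ such that e(F(s),F(t)) ≤ φ(t) − φ(s) for all s,t ∈ T with s ≤ t; moreover in that case V⁺(F,T) ≤ V(φ,T), the Jordan variation of φ. -/
open Set Metric EMetric Filter
open scoped ENNReal Pointwise

noncomputable def exc {M : Type*} [MetricSpace M] (X Y : Set M) : ℝ≥0∞ :=
  ⨆ x ∈ X, EMetric.infEdist x Y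

noncomputable def varBy {M : Type*} [MetricSpace M]
    (D : Set M → Set M → ℝ≥0∞) (F : ℝ → Set M) (T : Set ℝ) : ℝ≥0∞ :=
  ⨆ p : {p : ℕ × (ℕ → ℝ) // Monotone p.2 ∧ ∀ i, p.2 i ∈ T},
    ∑ i ∈ Finset.range p.1.1, D (F (p.1.2 i)) (F (p.1.2 (i + 1)))

noncomputable def varPlus {M : Type*} [MetricSpace M] (F : ℝ → Set M) (T : Set ℝ) : ℝ≥0∞ :=
  varBy exc F T

noncomputable def varMinus {M : Type*} [MetricSpace M] (F : ℝ → Set M) (T : Set ℝ) : ℝ≥0∞ :=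
  varBy (fun X Y => exc Y X) F T

noncomputable def varH {M : Type*} [MetricSpace M] (F : ℝ → Set M) (T : Set ℝ) : ℝ≥0∞ :=
  varBy EMetric.hausdorffEdist F T

/-!
The function `x ↦ V⁺(F, T ∩ (-∞, x])` is itself a majorant: appending the points `s ≤ t` to a
chain in `T ∩ (-∞, s]` shows that `V⁺(F, T ∩ (-∞, s]) + e(F s, F t) ≤ V⁺(F, T ∩ (-∞, t])`.
Conversely, a majorant `φ` bounds every chain sum by the corresponding sum of `|φ tᵢ - φ tᵢ₋₁|`,
hence by `V(φ, T)`, which is finite for bounded monotone `φ`.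
-/

section varBy

variable {M : Type*} [MetricSpace M] (D : Set M → Set M → ℝ≥0∞) (F : ℝ → Set M)

lemma varBy_mono {T₁ T₂ : Set ℝ} (h : T₁ ⊆ T₂) : varBy D F T₁ ≤ varBy D F T₂ :=
  iSup_le fun p => le_iSup_of_le ⟨p.1, p.2.1, fun i => h (p.2.2 i)⟩ le_rfl

lemma varBy_inter_Iic_add_le {T : Set ℝ} {s t : ℝ} (hs : s ∈ T) (ht : t ∈ T) (hst : s ≤ t) :
    varBy D F (T ∩ Iic s) + D (F s) (F t) ≤ varBy D F (T ∩ Iic t) := by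
  have : Nonempty {p : ℕ × (ℕ → ℝ) // Monotone p.2 ∧ ∀ i, p.2 i ∈ T ∩ Iic s} :=
    ⟨⟨(0, fun _ => s), monotone_const, fun _ => ⟨hs, self_mem_Iic⟩⟩⟩
  rw [varBy, ENNReal.iSup_add]
  refine iSup_le fun ⟨⟨n, u⟩, hu, huT⟩ => ?_
  have hus (i : ℕ) : u i ≤ s := (huT i).2
  let v : ℕ → ℝ := fun i => if i ≤ n then u i else if i = n + 1 then s else t
  have hv : Monotone v := by
    intro i j hij
    simp only [v]
    split_ifs <;> first | omega | linarith [hu hij, hus i]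
  have hvT : ∀ i, v i ∈ T ∩ Iic t := by
    intro i
    simp only [v]
    split_ifs
    exacts [⟨(huT i).1, (hus i).trans hst⟩, ⟨hs, hst⟩, ⟨ht, self_mem_Iic⟩]
  have hsum : ∑ i ∈ Finset.range n, D (F (v i)) (F (v (i + 1)))
      = ∑ i ∈ Finset.range n, D (F (u i)) (F (u (i + 1))) :=
    Finset.sum_congr rfl fun i hi => by
      have hi : i < n := Finset.mem_range.1 hi
      simp only [v, if_pos hi.le, if_pos (Nat.succ_le_of_lt hi)]
  calc ∑ i ∈ Finset.range n, D (F (u i)) (F (u (i + 1))) + D (F s) (F t)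
      ≤ ∑ i ∈ Finset.range (n + 2), D (F (v i)) (F (v (i + 1))) := by
        simp only [Finset.sum_range_succ, hsum]
        simpa [v] using add_le_add_left le_self_add _
    _ ≤ varBy D F (T ∩ Iic t) := le_iSup_of_le ⟨(n + 2, v), hv, hvT⟩ le_rfl

lemma exists_majorant_of_varBy_ne_top {T : Set ℝ} (h : varBy D F T ≠ ⊤) :
    ∃ φ : ℝ → ℝ, MonotoneOn φ T ∧ BddAbove (φ '' T) ∧ BddBelow (φ '' T) ∧
      ∀ s ∈ T, ∀ t ∈ T, s ≤ t → D (F s) (F t) ≤ ENNReal.ofReal (φ t - φ s) := by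
  have hle : ∀ x, varBy D F (T ∩ Iic x) ≤ varBy D F T := fun x => varBy_mono D F inter_subset_left
  have hne : ∀ x, varBy D F (T ∩ Iic x) ≠ ⊤ := fun x => ne_top_of_le_ne_top h (hle x)
  refine ⟨fun x => (varBy D F (T ∩ Iic x)).toReal, ?mono, ?bddAbove, ?bddBelow, ?majorant⟩
  case mono =>
    exact fun a _ b _ hab => ENNReal.toReal_mono (hne b)
      (varBy_mono D F (inter_subset_inter_right _ (Iic_subset_Iic.2 hab)))
  case bddAbove =>
    exact ⟨(varBy D F T).toReal, forall_mem_image.2 fun x _ => ENNReal.toReal_mono h (hle x)⟩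
  case bddBelow =>
    exact ⟨0, forall_mem_image.2 fun x _ => ENNReal.toReal_nonneg⟩
  case majorant =>
    intro s hs t ht hst
    have hst' := varBy_mono D F (inter_subset_inter_right T (Iic_subset_Iic.2 hst))
    rw [← ENNReal.toReal_sub_of_le hst' (hne t),
      ENNReal.ofReal_toReal (ne_top_of_le_ne_top (hne t) tsub_le_self)]
    exact ENNReal.le_sub_of_add_le_left (hne s) (varBy_inter_Iic_add_le D F hs ht hst)

lemma varBy_le_eVariationOn {T : Set ℝ} {φ : ℝ → ℝ}
    (h : ∀ s ∈ T, ∀ t ∈ T, s ≤ t → D (F s) (F t) ≤ ENNReal.ofReal (φ t - φ s)) :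
    varBy D F T ≤ eVariationOn φ T := by
  refine iSup_le fun ⟨⟨n, u⟩, hu, huT⟩ => ?_
  calc ∑ i ∈ Finset.range n, D (F (u i)) (F (u (i + 1)))
      ≤ ∑ i ∈ Finset.range n, edist (φ (u (i + 1))) (φ (u i)) := by
        refine Finset.sum_le_sum fun i _ => (h _ (huT i) _ (huT (i + 1)) (hu i.le_succ)).trans ?_
        rw [edist_dist, Real.dist_eq]
        exact ENNReal.ofReal_le_ofReal (le_abs_self _)
    _ ≤ eVariationOn φ T := eVariationOn.sum_le hu huT

end varBy

lemma MonotoneOn.boundedVariationOn_of_bddAbove_of_bddBelow {α : Type*} [LinearOrder α]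
    {f : α → ℝ} {s : Set α} (hf : MonotoneOn f s) (ha : BddAbove (f '' s))
    (hb : BddBelow (f '' s)) : BoundedVariationOn f s := by
  obtain ⟨C, hC⟩ := isBounded_iff_forall_norm_le.1 (isBounded_iff_bddBelow_bddAbove.2 ⟨hb, ha⟩)
  exact hf.boundedVariationOn fun x hx => hC _ (mem_image_of_mem f hx)

theorem varPlus_finite_iff_exists_majorant_general {M : Type*} [MetricSpace M]
    (T : Set ℝ) (F : ℝ → Set M) :
    (varPlus F T < ⊤ ↔
      ∃ φ : ℝ → ℝ, MonotoneOn φ T ∧ BddAbove (φ '' T) ∧ BddBelow (φ '' T) ∧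
        ∀ s ∈ T, ∀ t ∈ T, s ≤ t → exc (F s) (F t) ≤ ENNReal.ofReal (φ t - φ s)) ∧
    (∀ φ : ℝ → ℝ, MonotoneOn φ T → BddAbove (φ '' T) → BddBelow (φ '' T) →
      (∀ s ∈ T, ∀ t ∈ T, s ≤ t → exc (F s) (F t) ≤ ENNReal.ofReal (φ t - φ s)) →
      varPlus F T ≤ eVariationOn φ T) := by
  refine ⟨⟨fun h => exists_majorant_of_varBy_ne_top exc F h.ne, ?_⟩,
    fun φ _ _ _ h => varBy_le_eVariationOn exc F h⟩
  rintro ⟨φ, hφ, hφa, hφb, h⟩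
  exact (varBy_le_eVariationOn exc F h).trans_lt
    (hφ.boundedVariationOn_of_bddAbove_of_bddBelow hφa hφb).lt_top

/-- Characterization of finiteness of V⁺ via a nondecreasing bounded majorant φ,
with the bound V⁺(F,T) ≤ V(φ,T). -/
theorem varPlus_finite_iff_exists_majorant {M : Type*} [MetricSpace M]
    (T : Set ℝ) (F : ℝ → Set M)
    (hF : ∀ t ∈ T, (F t).Nonempty ∧ IsCompact (F t)) :
    (varPlus F T < ⊤ ↔
      ∃ φ : ℝ → ℝ, MonotoneOn φ T ∧ BddAbove (φ '' T) ∧ BddBelow (φ '' T) ∧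
        ∀ s ∈ T, ∀ t ∈ T, s ≤ t → exc (F s) (F t) ≤ ENNReal.ofReal (φ t - φ s)) ∧
    (∀ φ : ℝ → ℝ, MonotoneOn φ T → BddAbove (φ '' T) → BddBelow (φ '' T) →
      (∀ s ∈ T, ∀ t ∈ T, s ≤ t → exc (F s) (F t) ≤ ENNReal.ofReal (φ t - φ s)) →
      varPlus F T ≤ eVariationOn φ T) :=
  varPlus_finite_iff_exists_majorant_general T F
end

section
/- The right directional variation is lower semicontinuous under pointwise convergence: if F_n : T → c(M) converge pointwise on T to F in the Hausdorff metric (d_H(F_n(t),F(t)) → 0 for all t ∈ T), then V⁺(F,T) ≤ liminf_{n→∞} V⁺(F_n,T). -/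
open Set Metric EMetric Filter
open scoped ENNReal Pointwise

/-!
Along a fixed partition each excess term is lower semicontinuous under Hausdorff convergence, by the
triangle inequality `e(X, Y) ≤ d_H(X, X') + e(X', Y') + d_H(Y', Y)`. A finite sum of lower
semicontinuous terms is again lower semicontinuous, and so is the supremum over partitions.
-/

namespace ENNReal

variable {ι α : Type*} {l : Filter ι}

theorem liminf_add_liminf_le (u v : ι → ℝ≥0∞) :
    liminf u l + liminf v l ≤ liminf (u + v) l := by
  simp only [liminf_eq_iSup_iInf]
  refine biSup_add_biSup_le' ⟨univ, univ_mem⟩ ⟨univ, univ_mem⟩ fun s hs t ht => ?_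
  refine le_iSup₂_of_le (s ∩ t) (inter_mem hs ht) (le_iInf₂ fun a ha => ?_)
  exact add_le_add (iInf₂_le a ha.1) (iInf₂_le a ha.2)

theorem sum_liminf_le_liminf_sum (s : Finset α) (u : α → ι → ℝ≥0∞) :
    ∑ a ∈ s, liminf (u a) l ≤ liminf (fun n => ∑ a ∈ s, u a n) l := by
  classical
  induction s using Finset.induction_on with
  | empty => simp
  | insert a s ha ih =>
    simp only [Finset.sum_insert ha]
    exact (add_le_add le_rfl ih).trans (liminf_add_liminf_le _ _)

end ENNReal

section Excess

variable {M : Type*} [MetricSpace M]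

theorem infEDist_le_infEDist_add_exc (x : M) (X Y : Set M) :
    infEDist x Y ≤ infEDist x X + exc X Y := by
  rw [infEDist.eq_1 x X, iInf_subtype', ENNReal.iInf_add]
  refine le_iInf fun y => ?_
  calc infEDist x Y ≤ edist x y + infEDist (y : M) Y := infEDist_le_edist_add_infEDist
    _ ≤ edist x y + exc X Y := by gcongr; exact le_iSup₂ (f := fun z _ => infEDist z Y) y.1 y.2

theorem exc_le_hausdorffEDist_add_exc_add_hausdorffEDist (X X' Y Y' : Set M) :
    exc X Y ≤ hausdorffEDist X X' + exc X' Y' + hausdorffEDist Y' Y := by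
  refine iSup₂_le fun x hx => ?_
  calc infEDist x Y ≤ infEDist x Y' + hausdorffEDist Y' Y :=
        infEDist_le_infEDist_add_hausdorffEDist
    _ ≤ infEDist x X' + exc X' Y' + hausdorffEDist Y' Y := by
        gcongr; exact infEDist_le_infEDist_add_exc x X' Y'
    _ ≤ hausdorffEDist X X' + exc X' Y' + hausdorffEDist Y' Y := by
        gcongr; exact infEDist_le_hausdorffEDist_of_mem hx

theorem exc_le_liminf_exc {ι : Type*} {l : Filter ι} {A B : ι → Set M} {X Y : Set M}
    (hA : Tendsto (fun n => hausdorffEDist (A n) X) l (nhds 0))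
    (hB : Tendsto (fun n => hausdorffEDist (B n) Y) l (nhds 0)) :
    exc X Y ≤ liminf (fun n => exc (A n) (B n)) l := by
  have hA' : Tendsto (fun n => hausdorffEDist X (A n)) l (nhds 0) :=
    hA.congr fun _ => hausdorffEDist_comm
  calc exc X Y
      ≤ liminf ((fun n => hausdorffEDist X (A n)) + (fun n => exc (A n) (B n)) +
          fun n => hausdorffEDist (B n) Y) l :=
        le_liminf_of_le (by isBoundedDefault) (.of_forall fun n =>
          exc_le_hausdorffEDist_add_exc_add_hausdorffEDist _ _ _ _)
    _ = liminf (fun n => exc (A n) (B n)) l := by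
        rw [ENNReal.liminf_add_of_right_tendsto_zero hB,
          ENNReal.liminf_add_of_left_tendsto_zero hA']

end Excess

section Variation

variable {M : Type*} [MetricSpace M] (D : Set M → Set M → ℝ≥0∞)

theorem sum_le_varBy (F : ℝ → Set M) {T : Set ℝ} {m : ℕ} {s : ℕ → ℝ} (hs : Monotone s)
    (hsT : ∀ i, s i ∈ T) :
    ∑ i ∈ Finset.range m, D (F (s i)) (F (s (i + 1))) ≤ varBy D F T :=
  le_iSup (fun p : {p : ℕ × (ℕ → ℝ) // Monotone p.2 ∧ ∀ i, p.2 i ∈ T} =>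
    ∑ i ∈ Finset.range p.1.1, D (F (p.1.2 i)) (F (p.1.2 (i + 1)))) ⟨(m, s), hs, hsT⟩

theorem varBy_le_liminf_varBy {ι : Type*} {l : Filter ι} {T : Set ℝ} {F : ι → ℝ → Set M}
    {G : ℝ → Set M}
    (h : ∀ t ∈ T, ∀ t' ∈ T, D (G t) (G t') ≤ liminf (fun n => D (F n t) (F n t')) l) :
    varBy D G T ≤ liminf (fun n => varBy D (F n) T) l := by
  refine iSup_le fun ⟨(m, s), hs, hsT⟩ => ?_
  calc ∑ i ∈ Finset.range m, D (G (s i)) (G (s (i + 1)))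
      ≤ ∑ i ∈ Finset.range m, liminf (fun n => D (F n (s i)) (F n (s (i + 1)))) l :=
        Finset.sum_le_sum fun i _ => h _ (hsT i) _ (hsT (i + 1))
    _ ≤ liminf (fun n => ∑ i ∈ Finset.range m, D (F n (s i)) (F n (s (i + 1)))) l :=
        ENNReal.sum_liminf_le_liminf_sum _ fun i n => D (F n (s i)) (F n (s (i + 1)))
    _ ≤ liminf (fun n => varBy D (F n) T) l :=
        liminf_le_liminf (.of_forall fun n => sum_le_varBy D (F n) hs hsT)

end Variation

theorem varPlus_lowerSemicontinuous_general {M : Type*} [MetricSpace M]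
    (T : Set ℝ) (F : ℕ → ℝ → Set M) (G : ℝ → Set M)
    (hconv : ∀ t ∈ T,
      Filter.Tendsto (fun n => EMetric.hausdorffEdist (F n t) (G t)) Filter.atTop (nhds 0)) :
    varPlus G T ≤ Filter.liminf (fun n => varPlus (F n) T) Filter.atTop :=
  varBy_le_liminf_varBy exc fun t ht t' ht' => exc_le_liminf_exc (hconv t ht) (hconv t' ht')

/-- Lower semicontinuity of V⁺ under pointwise convergence in the Hausdorff metric. -/
theorem varPlus_lowerSemicontinuous {M : Type*} [MetricSpace M]
    (T : Set ℝ) (F : ℕ → ℝ → Set M) (G : ℝ → Set M)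
    (hF : ∀ n, ∀ t ∈ T, ((F n t).Nonempty ∧ IsCompact (F n t)))
    (hG : ∀ t ∈ T, (G t).Nonempty ∧ IsCompact (G t))
    (hconv : ∀ t ∈ T,
      Filter.Tendsto (fun n => EMetric.hausdorffEdist (F n t) (G t)) Filter.atTop (nhds 0)) :
    varPlus G T ≤ Filter.liminf (fun n => varPlus (F n) T) Filter.atTop :=
  varPlus_lowerSemicontinuous_general T F G hconv
end

section
/- Let F : T → c(M) with V⁺(F,T) < +∞ and let t ∈ T be a left limit point of T. Then V⁺(F, T∩(-∞,t]) = V⁺(F, T∩(-∞,t)) + limsup_{T ∋ s → t−0} e(F(s),F(t)). -/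
open Set Metric EMetric Filter
open scoped ENNReal Pointwise

open Topology

/-!
Write `V(s) = V⁺(F, T ∩ (-∞, s])`. A partition of `T ∩ (-∞, t]` either stays below `t` or, after
its first visit to `t`, only contributes `e(F t, F t) = 0`; appending `t` to a partition below `s`
adds exactly `e(F s, F t)`. Hence `V⁺(F, T ∩ (-∞, t]) = sup_{s < t} (V(s) + e(F s, F t))`, while
`V⁺(F, T ∩ (-∞, t)) = sup_{s < t} V(s)`. By the triangle inequality for the excess, both `V` and
`s ↦ V(s) + e(F s, F t)` are nondecreasing on `T ∩ (-∞, t)`, and for such a pair the supremum of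
the sum splits into `sup V` plus the limsup of `e(F s, F t)` as `s → t−`.
-/

section Excess

variable {M : Type*} [MetricSpace M]

lemma exc_self (X : Set M) : exc X X = 0 :=
  nonpos_iff_eq_zero.mp (iSup₂_le fun _ hx => (infEDist_zero_of_mem hx).le)

lemma exc_le_exc_add_exc (X Y Z : Set M) : exc X Z ≤ exc X Y + exc Y Z := by
  refine iSup₂_le fun x hx => ?_
  have hY : ∀ y ∈ Y, infEDist x Z ≤ edist x y + exc Y Z := fun y hy =>
    infEDist_le_edist_add_infEDist.trans
      (add_le_add_right (le_iSup₂ (f := fun y _ => infEDist y Z) y hy) _)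
  calc infEDist x Z ≤ ⨅ y ∈ Y, (edist x y + exc Y Z) := le_iInf₂ hY
    _ = infEDist x Y + exc Y Z := by simp only [infEDist, ENNReal.iInf_add]
    _ ≤ exc X Y + exc Y Z := add_le_add_left (le_iSup₂ (f := fun x _ => infEDist x Y) x hx) _

end Excess

section Append

variable {α : Type*}

def seqAppend (u : ℕ → α) (n : ℕ) (x : α) : ℕ → α := fun i => if i ≤ n then u i else x

variable {u : ℕ → α} {n : ℕ} {x : α}

lemma seqAppend_of_le {i : ℕ} (hi : i ≤ n) : seqAppend u n x i = u i := if_pos hi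

lemma seqAppend_of_lt {i : ℕ} (hi : n < i) : seqAppend u n x i = x :=
  if_neg (Nat.not_le.mpr hi)

lemma Monotone.seqAppend [Preorder α] (hu : Monotone u) (hx : u n ≤ x) :
    Monotone (seqAppend u n x) := by
  refine monotone_nat_of_le_succ fun i => ?_
  rcases lt_trichotomy i n with hi | rfl | hi
  · rw [seqAppend_of_le hi.le, seqAppend_of_le hi]
    exact hu i.le_succ
  · rw [seqAppend_of_le le_rfl, seqAppend_of_lt i.lt_succ_self]
    exact hx
  · rw [seqAppend_of_lt hi, seqAppend_of_lt (hi.trans i.lt_succ_self)]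

lemma seqAppend_mem {T : Set α} (hu : ∀ i, u i ∈ T) (hx : x ∈ T) (i : ℕ) :
    seqAppend u n x i ∈ T := by
  unfold seqAppend; split_ifs
  exacts [hu i, hx]

lemma sum_range_succ_seqAppend {β : Type*} [AddCommMonoid β] (D : α → α → β) :
    ∑ i ∈ Finset.range (n + 1), D (seqAppend u n x i) (seqAppend u n x (i + 1)) =
      ∑ i ∈ Finset.range n, D (u i) (u (i + 1)) + D (u n) x := by
  rw [Finset.sum_range_succ, seqAppend_of_le le_rfl, seqAppend_of_lt n.lt_succ_self]
  congr 1
  refine Finset.sum_congr rfl fun i hi => ?_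
  have hi : i < n := Finset.mem_range.mp hi
  rw [seqAppend_of_le hi.le, seqAppend_of_le hi]

end Append

lemma biSup_add_eq_biSup_add_limsup {α : Type*} [TopologicalSpace α] [LinearOrder α]
    [ClosedIicTopology α] {S : Set α} {t : α} (hS : S ⊆ Iio t) [(𝓝[S] t).NeBot]
    {V g : α → ℝ≥0∞} (hV : MonotoneOn V S)
    (hVg : MonotoneOn (fun s => V s + g s) S) :
    ⨆ s ∈ S, (V s + g s) = (⨆ s ∈ S, V s) + limsup g (𝓝[S] t) := by
  have hne : S.Nonempty := Filter.nonempty_of_mem (self_mem_nhdsWithin (a := t))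
  have later : ∀ s ∈ S, ∀ᶠ a in 𝓝[S] t, a ∈ S ∧ s < a := fun s hs =>
    eventually_mem_nhdsWithin.and (eventually_nhdsWithin_of_eventually_nhds
      (eventually_gt_nhds (hS hs)))
  refine le_antisymm (iSup₂_le fun s hs => ?_) ?_
  · calc V s + g s ≤ limsup (fun a => (⨆ s ∈ S, V s) + g a) (𝓝[S] t) :=
          le_limsup_of_frequently_le ((later s hs).mono fun a ⟨ha, hsa⟩ =>
            (hVg hs ha hsa.le).trans
              (add_le_add_left (le_iSup₂ (f := fun s _ => V s) a ha) _)).frequently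
      _ = (⨆ s ∈ S, V s) + limsup g (𝓝[S] t) :=
          limsup_const_add _ _ _ (by isBoundedDefault) (by isBoundedDefault)
  · rw [ENNReal.biSup_add hne]
    refine iSup₂_le fun s hs => ?_
    calc V s + limsup g (𝓝[S] t) = limsup (fun a => V s + g a) (𝓝[S] t) :=
          (limsup_const_add _ _ _ (by isBoundedDefault) (by isBoundedDefault)).symm
      _ ≤ ⨆ s ∈ S, (V s + g s) :=
          limsup_le_of_le (by isBoundedDefault) ((later s hs).mono fun a ⟨ha, hsa⟩ =>
            (add_le_add_left (hV hs ha hsa.le) _).trans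
              (le_iSup₂ (f := fun s _ => V s + g s) a ha))

section Variation

variable {M : Type*} [MetricSpace M] {F : ℝ → Set M} {T : Set ℝ}

lemma sum_exc_le_varPlus {u : ℕ → ℝ} (hu : Monotone u) (hT : ∀ i, u i ∈ T) (n : ℕ) :
    ∑ i ∈ Finset.range n, exc (F (u i)) (F (u (i + 1))) ≤ varPlus F T :=
  le_iSup_of_le (⟨(n, u), hu, hT⟩ : {p : ℕ × (ℕ → ℝ) // Monotone p.2 ∧ ∀ i, p.2 i ∈ T}) le_rfl

lemma varPlus_le {c : ℝ≥0∞} (h : ∀ (n : ℕ) (u : ℕ → ℝ), Monotone u → (∀ i, u i ∈ T) →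
    ∑ i ∈ Finset.range n, exc (F (u i)) (F (u (i + 1))) ≤ c) :
    varPlus F T ≤ c :=
  iSup_le fun p => h p.1.1 p.1.2 p.2.1 p.2.2

lemma varPlus_mono {T' : Set ℝ} (h : T ⊆ T') : varPlus F T ≤ varPlus F T' :=
  varPlus_le fun n _ hu hT => sum_exc_le_varPlus hu (fun i => h (hT i)) n

lemma sum_add_exc_le_varPlus {u : ℕ → ℝ} (hu : Monotone u) (hT : ∀ i, u i ∈ T) {n : ℕ} {x : ℝ}
    (hx : x ∈ T) (hux : u n ≤ x) :
    ∑ i ∈ Finset.range n, exc (F (u i)) (F (u (i + 1))) + exc (F (u n)) (F x) ≤ varPlus F T := by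
  rw [← sum_range_succ_seqAppend (fun a b => exc (F a) (F b))]
  exact sum_exc_le_varPlus (hu.seqAppend hux) (seqAppend_mem hT hx) _

lemma varPlus_Iic_add_exc_le {s t : ℝ} (hs : s ∈ T) (ht : t ∈ T) (hst : s ≤ t) :
    varPlus F (T ∩ Iic s) + exc (F s) (F t) ≤ varPlus F (T ∩ Iic t) := by
  have : Nonempty {p : ℕ × (ℕ → ℝ) // Monotone p.2 ∧ ∀ i, p.2 i ∈ T ∩ Iic s} :=
    ⟨⟨(0, fun _ => s), monotone_const, fun _ => ⟨hs, self_mem_Iic⟩⟩⟩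
  rw [varPlus, varBy, ENNReal.iSup_add]
  refine iSup_le fun ⟨(n, u), hu, hT⟩ => ?_
  have hw : Monotone (seqAppend u n s) := hu.seqAppend (hT n).2
  have hwT : ∀ i, seqAppend u n s i ∈ T ∩ Iic t :=
    seqAppend_mem (fun i => ⟨(hT i).1, (hT i).2.trans hst⟩) ⟨hs, hst⟩
  have hw_last : seqAppend u n s (n + 1) = s := seqAppend_of_lt n.lt_succ_self
  calc ∑ i ∈ Finset.range n, exc (F (u i)) (F (u (i + 1))) + exc (F s) (F t)
      ≤ ∑ i ∈ Finset.range n, exc (F (u i)) (F (u (i + 1))) + exc (F (u n)) (F s)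
          + exc (F s) (F t) := add_le_add_left le_self_add _
    _ = ∑ i ∈ Finset.range (n + 1),
          exc (F (seqAppend u n s i)) (F (seqAppend u n s (i + 1)))
          + exc (F (seqAppend u n s (n + 1))) (F t) := by
        rw [sum_range_succ_seqAppend (fun a b => exc (F a) (F b)), hw_last]
    _ ≤ varPlus F (T ∩ Iic t) :=
        sum_add_exc_le_varPlus hw hwT ⟨ht, self_mem_Iic⟩ (by rwa [hw_last])

lemma monotone_varPlus_Iic : Monotone fun s => varPlus F (T ∩ Iic s) :=
  fun _ _ hsa => varPlus_mono (inter_subset_inter_right _ (Iic_subset_Iic.mpr hsa))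

lemma monotoneOn_varPlus_Iic_add_exc (t : ℝ) :
    MonotoneOn (fun s => varPlus F (T ∩ Iic s) + exc (F s) (F t)) T := fun s hs a ha hsa =>
  calc varPlus F (T ∩ Iic s) + exc (F s) (F t)
      ≤ varPlus F (T ∩ Iic s) + (exc (F s) (F a) + exc (F a) (F t)) :=
        add_le_add_right (exc_le_exc_add_exc _ _ _) _
    _ = varPlus F (T ∩ Iic s) + exc (F s) (F a) + exc (F a) (F t) := (add_assoc _ _ _).symm
    _ ≤ varPlus F (T ∩ Iic a) + exc (F a) (F t) :=
        add_le_add_left (varPlus_Iic_add_exc_le hs ha hsa) _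

lemma sum_exc_le_varPlus_Iic {u : ℕ → ℝ} (hu : Monotone u) (hT : ∀ i, u i ∈ T) (n : ℕ) :
    ∑ i ∈ Finset.range n, exc (F (u i)) (F (u (i + 1))) ≤ varPlus F (T ∩ Iic (u n)) := by
  induction n with
  | zero => simp
  | succ n ih =>
    rw [Finset.sum_range_succ]
    exact (add_le_add_left ih _).trans (varPlus_Iic_add_exc_le (hT n) (hT (n + 1)) (hu n.le_succ))

lemma varPlus_Iio_eq_biSup {t : ℝ} :
    varPlus F (T ∩ Iio t) = ⨆ s ∈ T ∩ Iio t, varPlus F (T ∩ Iic s) :=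
  le_antisymm
    (varPlus_le fun n u hu hT => (sum_exc_le_varPlus_Iic hu hT n).trans <|
      (varPlus_mono (inter_subset_inter_left _ inter_subset_left)).trans
        (le_iSup₂ (f := fun s _ => varPlus F (T ∩ Iic s)) (u n) (hT n)))
    (iSup₂_le fun _ hs => varPlus_mono (inter_subset_inter_right _ (Iic_subset_Iio.2 hs.2)))

lemma sum_exc_le_biSup_varPlus_Iic_add_exc {t : ℝ} {u : ℕ → ℝ} (hu : Monotone u)
    (hT : ∀ i, u i ∈ T ∩ Iic t) (n : ℕ) :
    ∑ i ∈ Finset.range n, exc (F (u i)) (F (u (i + 1))) ≤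
      ⨆ s ∈ T ∩ Iio t, (varPlus F (T ∩ Iic s) + exc (F s) (F t)) := by
  have hT' : ∀ i, u i ∈ T := fun i => (hT i).1
  have le_sup : ∀ i, u i < t → varPlus F (T ∩ Iic (u i)) + exc (F (u i)) (F t) ≤
      ⨆ s ∈ T ∩ Iio t, (varPlus F (T ∩ Iic s) + exc (F s) (F t)) := fun i hi =>
    le_iSup₂ (f := fun s _ => varPlus F (T ∩ Iic s) + exc (F s) (F t)) (u i) ⟨hT' i, hi⟩
  induction n with
  | zero => simp
  | succ n ih =>
    rcases (mem_Iic.1 (hT (n + 1)).2).lt_or_eq with hlt | heq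
    · exact (sum_exc_le_varPlus_Iic hu hT' _).trans (le_self_add.trans (le_sup _ hlt))
    rw [Finset.sum_range_succ, heq]
    rcases (mem_Iic.1 (hT n).2).lt_or_eq with hlt | heq'
    · exact (add_le_add_left (sum_exc_le_varPlus_Iic hu hT' n) _).trans (le_sup n hlt)
    · rwa [heq', exc_self, add_zero]

lemma varPlus_Iic_eq_biSup {t : ℝ} (ht : t ∈ T) :
    varPlus F (T ∩ Iic t) = ⨆ s ∈ T ∩ Iio t, (varPlus F (T ∩ Iic s) + exc (F s) (F t)) :=
  le_antisymm (varPlus_le fun n _ hu hT => sum_exc_le_biSup_varPlus_Iic_add_exc hu hT n)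
    (iSup₂_le fun _ hs => varPlus_Iic_add_exc_le hs.1 ht hs.2.le)

end Variation

lemma nhdsWithin_inter_Iio_neBot {T : Set ℝ} {t : ℝ}
    (h : ∀ ε > 0, (T ∩ Ioo (t - ε) t).Nonempty) : (𝓝[T ∩ Iio t] t).NeBot := by
  refine mem_closure_iff_nhdsWithin_neBot.mp (Real.mem_closure_iff.mpr fun ε hε => ?_)
  obtain ⟨s, hsT, hs⟩ := h ε hε
  exact ⟨s, ⟨hsT, hs.2⟩, by rw [abs_sub_lt_iff]; constructor <;> linarith [hs.1, hs.2]⟩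

theorem varPlus_Iic_eq_Iio_add_jump_general {M : Type*} [MetricSpace M]
    (T : Set ℝ) (F : ℝ → Set M)
    (t : ℝ) (ht : t ∈ T)
    (hleft : ∀ ε > 0, (T ∩ Set.Ioo (t - ε) t).Nonempty) :
    varPlus F (T ∩ Set.Iic t) =
      varPlus F (T ∩ Set.Iio t) +
      Filter.limsup (fun s => exc (F s) (F t)) (nhdsWithin t (T ∩ Set.Iio t)) := by
  have := nhdsWithin_inter_Iio_neBot hleft
  rw [varPlus_Iic_eq_biSup ht, varPlus_Iio_eq_biSup]
  exact biSup_add_eq_biSup_add_limsup inter_subset_right (monotone_varPlus_Iic.monotoneOn _)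
    ((monotoneOn_varPlus_Iic_add_exc t).mono inter_subset_left)

/-- V⁺(F, T∩(-∞,t]) = V⁺(F, T∩(-∞,t)) + limsup_{T ∋ s → t−0} e(F(s),F(t)). -/
theorem varPlus_Iic_eq_Iio_add_jump {M : Type*} [MetricSpace M]
    (T : Set ℝ) (F : ℝ → Set M)
    (hF : ∀ t ∈ T, (F t).Nonempty ∧ IsCompact (F t))
    (hV : varPlus F T < ⊤) (t : ℝ) (ht : t ∈ T)
    (hleft : ∀ ε > 0, (T ∩ Set.Ioo (t - ε) t).Nonempty) :
    varPlus F (T ∩ Set.Iic t) =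
      varPlus F (T ∩ Set.Iio t) +
      Filter.limsup (fun s => exc (F s) (F t)) (nhdsWithin t (T ∩ Set.Iio t)) :=
  varPlus_Iic_eq_Iio_add_jump_general T F t ht hleft
end

section
/- For nonempty compact sets X, Y in a metric space M, the metric projection Pr_Y X := {y ∈ Y : ∃ x ∈ X with d(x,y) = d(x,Y)} is a nonempty compact subset of Y satisfying d_H(X, Pr_Y X) ≤ e(X,Y). -/
open Set Metric EMetric Filter
open scoped ENNReal Pointwise

/-!
Each `x ∈ X` has a nearest point in the compact set `Y`, and that point lies in `Pr_Y X`; each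
point of `Pr_Y X` is a nearest point of some `x ∈ X`. Either way the distance involved is
`d(x, Y) ≤ e(X, Y)`, which bounds both excesses in `d_H`. Compactness holds because `Pr_Y X` is
the projection to `Y` of a closed subset of `X × Y`.
-/

def metricProj {M : Type*} [MetricSpace M] (X Y : Set M) : Set M :=
  {y ∈ Y | ∃ x ∈ X, dist x y = infDist x Y}

section MetricProjection

variable {M : Type*} [MetricSpace M] {X Y : Set M}

theorem edist_eq_infEDist_of_dist_eq_infDist (hY : Y.Nonempty) {x y : M}
    (h : dist x y = infDist x Y) : edist x y = infEDist x Y := by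
  rw [edist_dist, h, infDist, ENNReal.ofReal_toReal (infEDist_ne_top hY)]

theorem infEDist_le_exc {x : M} (hx : x ∈ X) : infEDist x Y ≤ exc X Y :=
  le_iSup₂ (f := fun x _ => infEDist x Y) x hx

theorem metricProj_subset (X Y : Set M) : metricProj X Y ⊆ Y := fun _ hy => hy.1

theorem exists_mem_metricProj_edist_eq (hY : Y.Nonempty) (hYc : IsCompact Y) {x : M}
    (hx : x ∈ X) : ∃ y ∈ metricProj X Y, edist x y = infEDist x Y := by
  obtain ⟨y, hyY, hy⟩ := hYc.exists_infDist_eq_dist hY x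
  exact ⟨y, ⟨hyY, x, hx, hy.symm⟩, edist_eq_infEDist_of_dist_eq_infDist hY hy.symm⟩

theorem metricProj_nonempty (hX : X.Nonempty) (hY : Y.Nonempty) (hYc : IsCompact Y) :
    (metricProj X Y).Nonempty :=
  let ⟨_, hx⟩ := hX
  let ⟨y, hy, _⟩ := exists_mem_metricProj_edist_eq hY hYc hx
  ⟨y, hy⟩

theorem metricProj_eq_image_snd (X Y : Set M) :
    metricProj X Y = Prod.snd '' (X ×ˢ Y ∩ {p | dist p.1 p.2 = infDist p.1 Y}) := by
  ext y
  constructor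
  · rintro ⟨hyY, x, hx, h⟩
    exact ⟨(x, y), ⟨⟨hx, hyY⟩, h⟩, rfl⟩
  · rintro ⟨⟨x, y⟩, ⟨⟨hx, hyY⟩, h⟩, rfl⟩
    exact ⟨hyY, x, hx, h⟩

theorem isCompact_metricProj (hXc : IsCompact X) (hYc : IsCompact Y) :
    IsCompact (metricProj X Y) := by
  rw [metricProj_eq_image_snd]
  refine ((hXc.prod hYc).inter_right ?_).image continuous_snd
  exact isClosed_eq (continuous_fst.dist continuous_snd)
    ((continuous_infDist_pt Y).comp continuous_fst)

theorem hausdorffEDist_metricProj_le (hY : Y.Nonempty) (hYc : IsCompact Y) :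
    hausdorffEDist X (metricProj X Y) ≤ exc X Y := by
  refine hausdorffEDist_le_of_infEDist (fun x hx => ?_) ?_
  · obtain ⟨y, hy, hxy⟩ := exists_mem_metricProj_edist_eq hY hYc hx
    calc infEDist x (metricProj X Y) ≤ edist x y := infEDist_le_edist_of_mem hy
      _ = infEDist x Y := hxy
      _ ≤ exc X Y := infEDist_le_exc hx
  · rintro y ⟨-, x, hx, hxy⟩
    calc infEDist y X ≤ edist y x := infEDist_le_edist_of_mem hx
      _ = infEDist x Y := by rw [edist_comm, edist_eq_infEDist_of_dist_eq_infDist hY hxy]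
      _ ≤ exc X Y := infEDist_le_exc hx

end MetricProjection

/-- The metric projection Pr_Y X of a nonempty compact X onto a nonempty compact Y
is a nonempty compact subset of Y with d_H(X, Pr_Y X) ≤ e(X,Y). -/
theorem metric_projection_properties {M : Type*} [MetricSpace M]
    (X Y : Set M) (hX : X.Nonempty) (hXc : IsCompact X)
    (hY : Y.Nonempty) (hYc : IsCompact Y) :
    ({y ∈ Y | ∃ x ∈ X, dist x y = Metric.infDist x Y}).Nonempty ∧
    IsCompact {y ∈ Y | ∃ x ∈ X, dist x y = Metric.infDist x Y} ∧
    {y ∈ Y | ∃ x ∈ X, dist x y = Metric.infDist x Y} ⊆ Y ∧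
    EMetric.hausdorffEdist X {y ∈ Y | ∃ x ∈ X, dist x y = Metric.infDist x Y} ≤ exc X Y :=
  ⟨metricProj_nonempty hX hY hYc, isCompact_metricProj hXc hYc, metricProj_subset X Y,
    hausdorffEDist_metricProj_le hY hYc⟩
end

section
/- If T ⊆ ℝ and F : T → c(M) has bounded Jordan variation V(F,T) < +∞ with respect to the Hausdorff metric, then the image F(T) = ⋃_{t∈T} F(t) is a totally bounded subset of M. -/
/-! Replacing each value by its closure turns `F` into a curve of bounded variation in the
hyperspace `Closeds M`, whose uniformity is that of the Hausdorff edistance. A curve of bounded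
variation has totally bounded range: its increments are dominated by those of the bounded real
function `t ↦ variationOnFromTo f s a t`. Finally, a totally bounded family of totally bounded sets
has totally bounded union: approximate the family by finitely many of its members, and each of
those by a finite net. -/

open Set Metric EMetric Filter
open scoped ENNReal Pointwise

open TopologicalSpace

theorem TotallyBounded.image_of_edist_le {β E F : Type*} [PseudoEMetricSpace E]
    [PseudoEMetricSpace F] {g : β → E} {ψ : β → F} {s : Set β} (hψ : TotallyBounded (ψ '' s))
    (hg : ∀ x ∈ s, ∀ y ∈ s, edist (g x) (g y) ≤ edist (ψ x) (ψ y)) :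
    TotallyBounded (g '' s) := by
  refine EMetric.totallyBounded_iff.2 fun ε hε => ?_
  obtain ⟨u, hus, hufin, hcover⟩ :=
    exists_subset_image_finite_and.1 (EMetric.totallyBounded_iff'.1 hψ ε hε)
  refine ⟨g '' u, hufin.image g, ?_⟩
  rintro _ ⟨x, hx, rfl⟩
  obtain ⟨_, ⟨y, hy, rfl⟩, hxy⟩ := mem_iUnion₂.1 (hcover (mem_image_of_mem ψ hx))
  exact mem_iUnion₂.2 ⟨g y, mem_image_of_mem g hy, (hg x hx y (hus hy)).trans_lt hxy⟩

section Variation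

variable {α E : Type*} [LinearOrder α] [PseudoEMetricSpace E] {f : α → E} {s : Set α}

theorem LocallyBoundedVariationOn.edist_le_abs_variationOnFromTo
    (hf : LocallyBoundedVariationOn f s) {a b : α} (ha : a ∈ s) (hb : b ∈ s) :
    edist (f a) (f b) ≤ ENNReal.ofReal |variationOnFromTo f s a b| := by
  wlog hab : a ≤ b generalizing a b
  · rw [edist_comm, variationOnFromTo.eq_neg_swap, abs_neg]
    exact this hb ha (le_of_not_ge hab)
  rw [variationOnFromTo.eq_of_le f s hab, ENNReal.abs_toReal, ENNReal.ofReal_toReal (hf a b ha hb)]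
  exact eVariationOn.edist_le f ⟨ha, le_rfl, hab⟩ ⟨hb, hab, le_rfl⟩

theorem BoundedVariationOn.totallyBounded_image (hf : BoundedVariationOn f s) :
    TotallyBounded (f '' s) := by
  rcases s.eq_empty_or_nonempty with rfl | ⟨a, ha⟩
  · simp
  have hbounded : Bornology.IsBounded (variationOnFromTo f s a '' s) := by
    refine (Metric.isBounded_iff_subset_closedBall 0).2 ⟨(eVariationOn f s).toReal, ?_⟩
    rintro _ ⟨x, -, rfl⟩
    simpa using variationOnFromTo.abs_le_eVariationOn hf
  refine TotallyBounded.image_of_edist_le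
    (hbounded.isCompact_closure.totallyBounded.subset subset_closure) fun x hx y hy => ?_
  have hloc := hf.locallyBoundedVariationOn
  rw [edist_dist, Real.dist_eq, variationOnFromTo.sub_right hloc ha hx hy, edist_comm]
  exact hloc.edist_le_abs_variationOnFromTo hy hx

end Variation

open scoped Uniformity in
theorem TopologicalSpace.Closeds.totallyBounded_biUnion {α : Type*} [UniformSpace α]
    {𝒦 : Set (Closeds α)} (h𝒦 : TotallyBounded 𝒦) (hK : ∀ K ∈ 𝒦, TotallyBounded (K : Set α)) :
    TotallyBounded (⋃ K ∈ 𝒦, (K : Set α)) := by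
  intro U hU
  obtain ⟨V, hV, hVU⟩ := comp_mem_uniformity_sets hU
  obtain ⟨𝒞, h𝒞𝒦, h𝒞fin, h𝒦cover⟩ := totallyBounded_iff_subset.1 h𝒦 _
    ((𝓤 α).basis_sets.uniformity_closeds.mem_of_mem hV)
  choose! N hNfin hNcover using fun C (hC : C ∈ 𝒞) => hK C (h𝒞𝒦 hC) V hV
  refine ⟨⋃ C ∈ 𝒞, N C, h𝒞fin.biUnion hNfin, iUnion₂_subset fun K hK𝒦 x hx => ?_⟩
  obtain ⟨C, hC, hKC⟩ := mem_iUnion₂.1 (h𝒦cover hK𝒦)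
  obtain ⟨y, hy, hxy⟩ := hKC.1 hx
  obtain ⟨z, hz, hyz⟩ := mem_iUnion₂.1 (hNcover C hC hy)
  exact mem_iUnion₂.2 ⟨z, mem_biUnion hC hz, hVU ⟨y, hxy, hyz⟩⟩

theorem varH_eq_eVariationOn_closure {M : Type*} [MetricSpace M] (F : ℝ → Set M) (T : Set ℝ) :
    varH F T = eVariationOn (fun t => Closeds.closure (F t)) T := by
  have hterm : ∀ a b, edist (Closeds.closure (F b)) (Closeds.closure (F a)) =
      hausdorffEDist (F a) (F b) := fun a b => by
    rw [TopologicalSpace.Closeds.edist_eq, Closeds.coe_closure, Closeds.coe_closure,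
      hausdorffEDist_closure, hausdorffEDist_comm]
  simp only [varH, varBy, eVariationOn, hterm]
  apply le_antisymm
  · exact iSup_le fun p => le_iSup_of_le (p.1.1, ⟨p.1.2, p.2⟩) le_rfl
  · exact iSup_le fun p => le_iSup_of_le ⟨(p.1, p.2.1), p.2.2⟩ le_rfl

/-- A compact-valued multifunction of bounded variation has totally bounded image. -/
theorem totallyBounded_image_of_bounded_variation {M : Type*} [MetricSpace M]
    (T : Set ℝ) (F : ℝ → Set M)
    (hF : ∀ t ∈ T, (F t).Nonempty ∧ IsCompact (F t))
    (hV : varH F T < ⊤) :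
    TotallyBounded (⋃ t ∈ T, F t) := by
  set G : ℝ → Closeds M := fun t => Closeds.closure (F t)
  have hG : BoundedVariationOn G T := by
    rw [BoundedVariationOn, ← varH_eq_eVariationOn_closure]
    exact hV.ne
  refine (Closeds.totallyBounded_biUnion hG.totallyBounded_image ?_).subset ?_
  · rintro _ ⟨t, ht, rfl⟩
    exact (hF t ht).2.totallyBounded.closure
  · refine iUnion₂_subset fun t ht => subset_closure.trans ?_
    exact subset_biUnion_of_mem (u := ((↑) : Closeds M → Set M)) (mem_image_of_mem G ht)
end
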